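/- Let k be a field and V a finite-dimensional k-vector space of dimension n ≥ 1. Let T be a subgroup of GL(V) admitting a weight decomposition V = ⊕_{i∈I} V_i with weights χ_i pairwise distinct, and let u ∈ GL(V) be a unipotent automorphism with a single Jordan block which normalizes T (i.e. u·T·u⁻¹ = T). Then all the weight spaces V_i have the same dimension d (so n = d·|I|); moreover, there exists a k-subspace W of V with 0 ≠ W ≠ V that is invariant under u and under every element of T if and only if d > 1. -/

import Mathlib

/-!
Conjugation by `u` permutes the characters of `T`, so `u` permutes the weight spaces through some
`σ`. Since `u - 1` is a regular nilpotent, its kernel is a line contained in every nonzero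
`u`-stable subspace; hence `V` is not the direct sum of two nonzero `u`-stable subspaces and `σ`
is transitive, so all weight spaces have the same dimension `d`. A `T`-stable subspace is the sum
of its intersections with the weight spaces. If `d = 1` and it is also `u`-stable, the set of
weight spaces it contains is `σ`-stable, so the subspace is `0` or `V`. If `d > 1`, the weight
spaces meet the `u`-stable hyperplane `range (u - 1)` nontrivially, and these intersections span
a proper nonzero invariant subspace.
-/

open Module LinearMap

namespace Module.End

variable {k V : Type*} [Field k] [AddCommGroup V] [Module k V] {N : Module.End k V}

lemma ker_pow_lt_ker_pow_succ (hN : IsNilpotent N) (hreg : N ^ (finrank k V - 1) ≠ 0)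
    {m : ℕ} (hm : m < finrank k V) : ker (N ^ m) < ker (N ^ (m + 1)) := by
  refine lt_of_le_of_ne (pow_succ' N m ▸ ker_le_ker_comp _ _) fun h => hreg ?_
  obtain ⟨K, hK⟩ := hN
  have hm0 : N ^ m = 0 := by
    rw [← ker_eq_top, ker_pow_constant h K, pow_add, hK, mul_zero, ker_zero]
  rw [← Nat.sub_add_cancel (Nat.le_sub_one_of_lt hm), pow_add, hm0, mul_zero]

lemma finrank_ker_pow_add_le [FiniteDimensional k V] (hN : IsNilpotent N)
    (hreg : N ^ (finrank k V - 1) ≠ 0) {a b : ℕ} (hab : a + b ≤ finrank k V) :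
    finrank k (ker (N ^ a)) + b ≤ finrank k (ker (N ^ (a + b))) := by
  induction b with
  | zero => simp
  | succ b ih =>
    have := Submodule.finrank_lt_finrank_of_lt
      (ker_pow_lt_ker_pow_succ hN hreg (m := a + b) (by omega))
    have := ih (by omega)
    change _ + (b + 1) ≤ finrank k (ker (N ^ (a + b + 1)))
    omega

lemma finrank_ker_eq_one [FiniteDimensional k V] (hN : IsNilpotent N)
    (hreg : N ^ (finrank k V - 1) ≠ 0) : finrank k (ker N) = 1 := by
  have : Nontrivial V := by
    by_contra h
    rw [not_nontrivial_iff_subsingleton] at h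
    exact hreg (Subsingleton.elim _ _)
  have hn := Module.finrank_pos (R := k) (M := V)
  have h₀ := finrank_ker_pow_add_le hN hreg (a := 0) (b := 1) (by omega)
  have h₁ := finrank_ker_pow_add_le hN hreg (a := 1) (b := finrank k V - 1) (by omega)
  have h₂ := Submodule.finrank_le (ker (N ^ (1 + (finrank k V - 1))))
  rw [pow_zero, one_eq_id, ker_id, finrank_bot, zero_add, pow_one] at h₀
  rw [pow_one] at h₁
  omega

lemma ker_le_of_invariant [FiniteDimensional k V] (hN : IsNilpotent N)
    (hker : finrank k (ker N) = 1) {W : Submodule k V} (hW : W ≠ ⊥) (hNW : ∀ w ∈ W, N w ∈ W) :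
    ker N ≤ W := by
  have : Nontrivial W := Submodule.nontrivial_iff_ne_bot.mpr hW
  have hres : ker (N.restrict hNW) ≠ ⊥ :=
    mt (isUnit_iff_ker_eq_bot _).mpr (isNilpotent.restrict hNW hN).not_isUnit
  obtain ⟨w, hw, hw0⟩ := (Submodule.ne_bot_iff _).mp hres
  have hWker : W ⊓ ker N ≠ ⊥ := by
    refine (Submodule.ne_bot_iff _).mpr ⟨w, ⟨w.2, ?_⟩, by simpa using hw0⟩
    simpa [restrict_apply] using congrArg Subtype.val hw
  have := Submodule.eq_of_le_of_finrank_le (inf_le_right : W ⊓ ker N ≤ ker N)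
    (hker ▸ Nat.one_le_iff_ne_zero.mpr (mt Submodule.finrank_eq_zero.mp hWker))
  exact this ▸ inf_le_left

end Module.End

section JointEigenspace

variable {k V G ι : Type*} [Field k] [AddCommGroup V] [Module k V]

def jointEigenspace (ρ : G → Module.End k V) (ψ : G → k) : Submodule k V :=
  ⨅ t, (ρ t).eigenspace (ψ t)

variable {ρ : G → Module.End k V} {Vi : ι → Submodule k V} {χ : ι → G → k}

lemma mem_jointEigenspace {ψ : G → k} {x : V} :
    x ∈ jointEigenspace ρ ψ ↔ ∀ t, ρ t x = ψ t • x := by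
  simp [jointEigenspace]

lemma mem_of_sum_mem_of_invariant (hχ : ∀ i t, ∀ v ∈ Vi i, ρ t v = χ i t • v)
    (hχinj : Function.Injective χ) {W : Submodule k V} (hW : ∀ t, ∀ w ∈ W, ρ t w ∈ W)
    {y : ι → V} (hy : ∀ i, y i ∈ Vi i) {s : Finset ι} (hs : ∑ i ∈ s, y i ∈ W) {i : ι}
    (hi : i ∈ s) : y i ∈ W := by
  classical
  suffices key : ∀ s : Finset ι, i ∉ s → ∀ y : ι → V, (∀ i, y i ∈ Vi i) →
      y i + ∑ j ∈ s, y j ∈ W → y i ∈ W by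
    exact key (s.erase i) (s.notMem_erase i) y hy (by rwa [Finset.add_sum_erase s y hi])
  intro s
  induction s using Finset.induction_on with
  | empty => simp
  | insert a s ha ih =>
    intro hi y hy hyW
    obtain ⟨hia, his⟩ : i ≠ a ∧ i ∉ s := by simpa using hi
    obtain ⟨t, ht⟩ := Function.ne_iff.mp (hχinj.ne hia)
    -- multiplying by `ρ t - χ a t` kills the `a`-component and rescales the others
    have key := ih his (fun j => (χ j t - χ a t) • y j) (fun j => (Vi j).smul_mem _ (hy j)) <| by
      convert W.sub_mem (hW t _ hyW) (W.smul_mem (χ a t) hyW) using 1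
      simp [Finset.sum_insert ha, map_sum, hχ _ t _ (hy _), sub_smul, Finset.smul_sum,
        Finset.sum_sub_distrib]
      abel
    exact (W.smul_mem_iff (sub_ne_zero.mpr ht)).mp key

lemma Submodule.exists_finset_sum_eq_of_iSup_eq_top (htop : ⨆ i, Vi i = ⊤) (x : V) :
    ∃ (s : Finset ι) (μ : ∀ i, Vi i), ∑ i ∈ s, (μ i : V) = x := by
  obtain ⟨s, hs⟩ := Submodule.mem_iSup_iff_exists_finset.mp (htop ▸ Submodule.mem_top (x := x))
  exact ⟨s, (Submodule.mem_iSup_finset_iff_exists_sum _ _).mp hs⟩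

lemma jointEigenspace_le_iSup (hχ : ∀ i t, ∀ v ∈ Vi i, ρ t v = χ i t • v)
    (hχinj : Function.Injective χ) (htop : ⨆ i, Vi i = ⊤) (ψ : G → k) :
    jointEigenspace ρ ψ ≤ ⨆ (i) (_ : χ i = ψ), Vi i := by
  intro x hx
  obtain ⟨s, μ, rfl⟩ := Submodule.exists_finset_sum_eq_of_iSup_eq_top htop x
  have hμ : ∀ i ∈ s, χ i ≠ ψ → (μ i : V) = 0 := by
    intro i hi hiψ
    obtain ⟨t, ht⟩ := Function.ne_iff.mp hiψ
    have hbot : ∀ t, ∀ w ∈ (⊥ : Submodule k V), ρ t w ∈ (⊥ : Submodule k V) := by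
      simp
    -- the components of `ρ t x - ψ t • x = 0` are the `(χ j t - ψ t) • μ j`
    have := mem_of_sum_mem_of_invariant hχ hχinj hbot
      (y := fun j => (χ j t - ψ t) • (μ j : V)) (fun j => (Vi j).smul_mem _ (μ j).2) ?_ hi
    · simpa [sub_eq_zero, ht] using this
    · rw [Submodule.mem_bot, ← sub_eq_zero.mpr (mem_jointEigenspace.mp hx t)]
      simp [sub_smul, Finset.sum_sub_distrib, Finset.smul_sum, map_sum,
        fun j => hχ j t _ (μ j).2]
  refine Submodule.sum_mem _ fun i hi => ?_
  by_cases h : χ i = ψ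
  · exact Submodule.mem_iSup_of_mem i (Submodule.mem_iSup_of_mem h (μ i).2)
  · rw [hμ i hi h]
    exact zero_mem _

lemma jointEigenspace_eq (hχ : ∀ i t, ∀ v ∈ Vi i, ρ t v = χ i t • v)
    (hχinj : Function.Injective χ) (htop : ⨆ i, Vi i = ⊤) (i : ι) :
    jointEigenspace ρ (χ i) = Vi i := by
  refine le_antisymm ((jointEigenspace_le_iSup hχ hχinj htop _).trans ?_)
    fun v hv => mem_jointEigenspace.mpr fun t => hχ i t v hv
  simp [hχinj.eq_iff]

lemma exists_eq_of_jointEigenspace_ne_bot (hχ : ∀ i t, ∀ v ∈ Vi i, ρ t v = χ i t • v)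
    (hχinj : Function.Injective χ) (htop : ⨆ i, Vi i = ⊤) {ψ : G → k}
    (hψ : jointEigenspace ρ ψ ≠ ⊥) : ∃ i, χ i = ψ := by
  by_contra! h
  exact hψ (eq_bot_iff.mpr ((jointEigenspace_le_iSup hχ hχinj htop ψ).trans (by simp [h])))

lemma eq_iSup_inf_of_invariant (hχ : ∀ i t, ∀ v ∈ Vi i, ρ t v = χ i t • v)
    (hχinj : Function.Injective χ) (htop : ⨆ i, Vi i = ⊤) {W : Submodule k V}
    (hW : ∀ t, ∀ w ∈ W, ρ t w ∈ W) : W = ⨆ i, W ⊓ Vi i := by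
  refine le_antisymm (fun x hx => ?_) (iSup_le fun i => inf_le_left)
  obtain ⟨s, μ, rfl⟩ := Submodule.exists_finset_sum_eq_of_iSup_eq_top htop x
  exact Submodule.sum_mem _ fun i hi => Submodule.mem_iSup_of_mem i
    ⟨mem_of_sum_mem_of_invariant hχ hχinj hW (fun j => (μ j).2) hx hi, (μ i).2⟩

end JointEigenspace

section Normalizer

variable {k V : Type*} [Field k] [AddCommGroup V] [Module k V] {T : Subgroup (V ≃ₗ[k] V)}

lemma map_jointEigenspace_le (g : Subgroup.normalizer (T : Set (V ≃ₗ[k] V))) (ψ : T → k) :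
    (jointEigenspace (fun t : T => ((t : V ≃ₗ[k] V) : Module.End k V)) ψ).map
      ((g : V ≃ₗ[k] V) : V →ₗ[k] V) ≤
      jointEigenspace (fun t : T => ((t : V ≃ₗ[k] V) : Module.End k V)) (fun t => ψ (g⁻¹ • t)) := by
  rintro _ ⟨x, hx, rfl⟩
  refine mem_jointEigenspace.mpr fun t => ?_
  have hconj : (t : V ≃ₗ[k] V) * g = g * (g⁻¹ • t : T) := by
    change _ = (g : V ≃ₗ[k] V) * ((g : V ≃ₗ[k] V)⁻¹ * t * (g : V ≃ₗ[k] V)⁻¹⁻¹)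
    group
  calc (t : V ≃ₗ[k] V) ((g : V ≃ₗ[k] V) x) = ((t : V ≃ₗ[k] V) * g) x := rfl
    _ = (g : V ≃ₗ[k] V) (((g⁻¹ • t : T) : V ≃ₗ[k] V) x) := by rw [hconj]; rfl
    _ = _ := (congrArg _ (mem_jointEigenspace.mp hx _)).trans (map_smul _ _ _)

lemma map_jointEigenspace (g : Subgroup.normalizer (T : Set (V ≃ₗ[k] V))) (ψ : T → k) :
    (jointEigenspace (fun t : T => ((t : V ≃ₗ[k] V) : Module.End k V)) ψ).map
      ((g : V ≃ₗ[k] V) : V →ₗ[k] V) =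
      jointEigenspace (fun t : T => ((t : V ≃ₗ[k] V) : Module.End k V)) (fun t => ψ (g⁻¹ • t)) := by
  refine le_antisymm (map_jointEigenspace_le g ψ) fun x hx => ⟨(g⁻¹ : V ≃ₗ[k] V) x, ?_, ?_⟩
  · simpa [smul_smul] using map_jointEigenspace_le g⁻¹ _ ⟨x, hx, rfl⟩
  · simp

lemma exists_map_eq_of_mem_normalizer {ι : Type*} {Vi : ι → Submodule k V} {χ : ι → T → k}
    (hχ : ∀ i (t : T), ∀ v ∈ Vi i, (t : V ≃ₗ[k] V) v = χ i t • v)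
    (hχinj : Function.Injective χ) (htop : ⨆ i, Vi i = ⊤) (hne : ∀ i, Vi i ≠ ⊥)
    {u : V ≃ₗ[k] V} (hu : u ∈ Subgroup.normalizer (T : Set (V ≃ₗ[k] V))) (i : ι) :
    ∃ j, (Vi i).map (u : V →ₗ[k] V) = Vi j := by
  have hmap := map_jointEigenspace ⟨u, hu⟩ (χ i)
  rw [jointEigenspace_eq hχ hχinj htop] at hmap
  obtain ⟨j, hj⟩ := exists_eq_of_jointEigenspace_ne_bot hχ hχinj htop
    (hmap ▸ (Submodule.map_eq_bot_iff (e := u)).not.mpr (hne i))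
  exact ⟨j, hmap.trans (hj ▸ jointEigenspace_eq hχ hχinj htop j)⟩

end Normalizer

section RegularUnipotent

variable {k V ι : Type*} [Field k] [AddCommGroup V] [Module k V] [FiniteDimensional k V]

lemma forall_of_map_le {Vi : ι → Submodule k V} (hindep : iSupIndep Vi) (hne : ∀ i, Vi i ≠ ⊥)
    {u : V ≃ₗ[k] V} (hN : IsNilpotent ((u : Module.End k V) - 1))
    (hker : finrank k (ker ((u : Module.End k V) - 1)) = 1)
    {σ : ι → ι} (hσ : ∀ i, (Vi i).map (u : V →ₗ[k] V) ≤ Vi (σ i))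
    {p : ι → Prop} (hp : ∀ i, p (σ i) ↔ p i) {i : ι} (hi : p i) (j : ι) : p j := by
  -- the sums of the weight spaces over `p` and over `¬ p` are `u`-stable and independent, but
  -- both would contain the line `ker (u - 1)`
  have hstable : ∀ q : ι → Prop, (∀ i, q i → q (σ i)) →
      ∀ v ∈ ⨆ i ∈ {i | q i}, Vi i,
        ((u : Module.End k V) - 1) v ∈ ⨆ i ∈ {i | q i}, Vi i := by
    intro q hq v hv
    have hmap : (⨆ i ∈ {i | q i}, Vi i).map (u : V →ₗ[k] V) ≤ ⨆ i ∈ {i | q i}, Vi i := by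
      simp_rw [Submodule.map_iSup]
      exact iSup₂_le fun i hi => (hσ i).trans (le_iSup₂ (f := fun i _ => Vi i) (σ i) (hq i hi))
    simpa using sub_mem (hmap ⟨v, hv, rfl⟩) hv
  have hne' : ∀ q : ι → Prop, ∀ i, q i → ⨆ i ∈ {i | q i}, Vi i ≠ ⊥ := fun q i hi =>
    ne_bot_of_le_ne_bot (hne i) (le_iSup₂ (f := fun i (_ : i ∈ {i | q i}) => Vi i) i hi)
  by_contra hj
  have hp' := Module.End.ker_le_of_invariant hN hker (hne' p i hi)
    (hstable p fun i => (hp i).mpr)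
  have hnp := Module.End.ker_le_of_invariant hN hker (hne' (¬ p ·) j hj)
    (hstable (¬ p ·) fun i => mt (hp i).mp)
  have hdisj := hindep.disjoint_biSup_biSup (s := {i | p i}) (t := {i | ¬ p i})
    (Set.disjoint_left.mpr fun _ h h' => h' h)
  rw [disjoint_self.mp (hdisj.mono hp' hnp), finrank_bot] at hker
  exact zero_ne_one hker

lemma eq_bot_or_eq_top_of_finrank_eq_one {G : Type*} [DecidableEq ι] {ρ : G → Module.End k V}
    {Vi : ι → Submodule k V} {χ : ι → G → k} (hχ : ∀ i t, ∀ v ∈ Vi i, ρ t v = χ i t • v)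
    (hχinj : Function.Injective χ) (hdirect : DirectSum.IsInternal Vi) (hne : ∀ i, Vi i ≠ ⊥)
    {u : V ≃ₗ[k] V} (hN : IsNilpotent ((u : Module.End k V) - 1))
    (hker : finrank k (ker ((u : Module.End k V) - 1)) = 1)
    {σ : ι → ι} (hσ : ∀ i, (Vi i).map (u : V →ₗ[k] V) = Vi (σ i))
    (hd : ∀ i, finrank k (Vi i) = 1) {W : Submodule k V} (hWu : ∀ v ∈ W, u v ∈ W)
    (hWρ : ∀ t, ∀ w ∈ W, ρ t w ∈ W) : W = ⊥ ∨ W = ⊤ := by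
  have hWeq : W.map (u : V →ₗ[k] V) = W :=
    Submodule.eq_of_le_of_finrank_eq (Submodule.map_le_iff_le_comap.mpr hWu)
      (LinearEquiv.finrank_map_eq u W)
  have hp : ∀ i, Vi (σ i) ≤ W ↔ Vi i ≤ W := fun i => by
    conv_lhs => rw [← hσ i, ← hWeq]
    exact Submodule.map_le_map_iff_of_injective u.injective _ _
  by_cases h : ∃ i, Vi i ≤ W
  · obtain ⟨i, hi⟩ := h
    refine Or.inr (eq_top_iff.mpr (hdirect.submodule_iSup_eq_top ▸ iSup_le fun j => ?_))
    exact forall_of_map_le hdirect.submodule_iSupIndep hne hN hker (fun i => (hσ i).le)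
      (p := (Vi · ≤ W)) hp hi j
  · push Not at h
    refine Or.inl ((eq_iSup_inf_of_invariant hχ hχinj hdirect.submodule_iSup_eq_top hWρ).trans
      (iSup_eq_bot.mpr fun i => Submodule.finrank_eq_zero.mp ?_))
    have hle := Submodule.finrank_mono (inf_le_right : W ⊓ Vi i ≤ Vi i)
    have hne1 : finrank k (W ⊓ Vi i : Submodule k V) ≠ 1 := fun h1 =>
      h i (Submodule.eq_of_le_of_finrank_eq inf_le_right (h1.trans (hd i).symm) ▸ inf_le_left)
    rw [hd i] at hle
    omega

lemma exists_invariant_of_one_lt_finrank [Nonempty ι] {G : Type*} {ρ : G → Module.End k V}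
    {Vi : ι → Submodule k V} {χ : ι → G → k} (hχ : ∀ i t, ∀ v ∈ Vi i, ρ t v = χ i t • v)
    {u : V ≃ₗ[k] V} (hker : finrank k (ker ((u : Module.End k V) - 1)) = 1)
    {σ : ι → ι} (hσ : ∀ i, (Vi i).map (u : V →ₗ[k] V) ≤ Vi (σ i))
    (hd : ∀ i, 1 < finrank k (Vi i)) :
    ∃ W : Submodule k V, W ≠ ⊥ ∧ W ≠ ⊤ ∧ (∀ v ∈ W, u v ∈ W) ∧ ∀ t, ∀ w ∈ W, ρ t w ∈ W := by
  set N := (u : Module.End k V) - 1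
  have hrange : finrank k (range N) + 1 = finrank k V := hker ▸ finrank_range_add_finrank_ker N
  have hNu : ∀ w ∈ range N, u w ∈ range N := fun w hw => by
    have : u w = w + N w := by simp [N]
    exact this ▸ add_mem hw (mem_range_self N w)
  refine ⟨⨆ i, Vi i ⊓ range N, ?_, ?_, ?_, ?_⟩
  · -- a weight space of dimension at least two meets the hyperplane `range N`
    obtain ⟨i⟩ := ‹Nonempty ι›
    have hdim := Submodule.finrank_sup_add_finrank_inf_eq (Vi i) (range N)
    have := Submodule.finrank_le (Vi i ⊔ range N)
    have := hd i
    refine ne_bot_of_le_ne_bot (fun h0 => ?_) (le_iSup (fun i => Vi i ⊓ range N) i)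
    rw [h0, finrank_bot] at hdim
    omega
  · refine ne_top_of_le_ne_top (fun h => ?_) (iSup_le fun i => inf_le_right)
    rw [h, finrank_top] at hrange
    omega
  · intro v hv
    have : (⨆ i, Vi i ⊓ range N).map (u : V →ₗ[k] V) ≤ ⨆ i, Vi i ⊓ range N := by
      rw [Submodule.map_iSup]
      exact iSup_le fun i => (Submodule.map_inf_le _).trans <| le_iSup_of_le (σ i) <|
        inf_le_inf (hσ i) (Submodule.map_le_iff_le_comap.mpr hNu)
    exact this ⟨v, hv, rfl⟩
  · intro t w hw
    refine (iSup_le fun i v hv => ?_ : _ ≤ (⨆ i, Vi i ⊓ range N).comap (ρ t)) hw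
    exact Submodule.mem_iSup_of_mem i (hχ i t v hv.1 ▸ Submodule.smul_mem _ _ hv)

end RegularUnipotent

lemma DirectSum.IsInternal.finrank_eq_sum {k V ι : Type*} [Field k] [AddCommGroup V]
    [Module k V] [FiniteDimensional k V] [Fintype ι] [DecidableEq ι] {Vi : ι → Submodule k V}
    (h : DirectSum.IsInternal Vi) : finrank k V = ∑ i, finrank k (Vi i) :=
  (LinearEquiv.ofBijective (DirectSum.coeLinearMap Vi) h).finrank_eq.symm.trans
    (Module.finrank_directSum k _)

theorem stmt6_general {k V : Type*} [Field k] [AddCommGroup V] [Module k V]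
    [FiniteDimensional k V]
    (T : Subgroup (V ≃ₗ[k] V))
    {I : Type*} [Fintype I] [DecidableEq I]
    (Vi : I → Submodule k V) (hne : ∀ i, Vi i ≠ ⊥)
    (hdirect : DirectSum.IsInternal Vi)
    (χ : I → ↥T → k)
    (hχ : ∀ i, ∀ t : ↥T, ∀ v ∈ Vi i, (t : V ≃ₗ[k] V) v = χ i t • v)
    (hdist : ∀ i j, i ≠ j → ∃ t : ↥T, χ i t ≠ χ j t)
    (u : V ≃ₗ[k] V)
    (hu : IsNilpotent ((u : Module.End k V) - 1))
    (hreg : ((u : Module.End k V) - 1) ^ (Module.finrank k V - 1) ≠ 0)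
    (hnorm : ∀ t : V ≃ₗ[k] V, t ∈ T ↔ u * t * u⁻¹ ∈ T) :
    ∃ d : ℕ, (∀ i, Module.finrank k (Vi i) = d) ∧
      Module.finrank k V = d * Fintype.card I ∧
      ((∃ W : Submodule k V, W ≠ ⊥ ∧ W ≠ ⊤ ∧
          (∀ v ∈ W, u v ∈ W) ∧ ∀ t ∈ T, ∀ v ∈ W, t v ∈ W) ↔ 1 < d) := by
  have hker := Module.End.finrank_ker_eq_one hu hreg
  have hχinj : Function.Injective χ := fun i j h => by_contra fun hij =>
    let ⟨t, ht⟩ := hdist i j hij; ht (congrFun h t)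
  choose σ hσ using exists_map_eq_of_mem_normalizer hχ hχinj hdirect.submodule_iSup_eq_top hne
    (Subgroup.mem_normalizer_iff.mpr hnorm)
  obtain ⟨i₀⟩ : Nonempty I := by
    by_contra hI
    rw [not_nonempty_iff] at hI
    have := Submodule.finrank_le (ker ((u : Module.End k V) - 1))
    rw [hdirect.finrank_eq_sum, Finset.univ_eq_empty, Finset.sum_empty] at this
    omega
  have hd : ∀ i, finrank k (Vi i) = finrank k (Vi i₀) := fun i =>
    forall_of_map_le hdirect.submodule_iSupIndep hne hu hker (fun i => (hσ i).le)
      (p := fun j => finrank k (Vi j) = finrank k (Vi i₀))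
      (fun j => by rw [← hσ j, LinearEquiv.finrank_map_eq]) rfl i
  refine ⟨finrank k (Vi i₀), hd, by simp [hdirect.finrank_eq_sum, hd, mul_comm], ?_, fun h1 => ?_⟩
  · rintro ⟨W, hW₀, hW₁, hWu, hWT⟩
    by_contra h1
    have hd1 : ∀ i, finrank k (Vi i) = 1 := fun i => (hd i).trans <|
      le_antisymm (not_lt.mp h1) (Submodule.one_le_finrank_iff.mpr (hne i₀))
    rcases eq_bot_or_eq_top_of_finrank_eq_one (ρ := fun t : T => ((t : V ≃ₗ[k] V) : Module.End k V))
      hχ hχinj hdirect hne hu hker hσ hd1 hWu (fun t => hWT t t.2) with h | h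
    exacts [hW₀ h, hW₁ h]
  · have : Nonempty I := ⟨i₀⟩
    obtain ⟨W, hW₀, hW₁, hWu, hWT⟩ := exists_invariant_of_one_lt_finrank
      (ρ := fun t : T => ((t : V ≃ₗ[k] V) : Module.End k V)) hχ hker (fun i => (hσ i).le)
      (fun i => hd i ▸ h1)
    exact ⟨W, hW₀, hW₁, hWu, fun t ht => hWT ⟨t, ht⟩⟩

/-- Proposition `prop:torus SL`.  Let `T ≤ GL(V)` admit a weight
decomposition `V = ⊕ᵢ Vᵢ` with pairwise distinct weights `χᵢ`, and let `u` be a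
unipotent automorphism of `V` with a single Jordan block normalising `T`.  Then all
weight spaces have the same dimension `d` (so `dim V = d * |I|`), and there is a
proper non-zero subspace invariant under `u` and `T` iff `d > 1`. -/
theorem stmt6 {k V : Type*} [Field k] [AddCommGroup V] [Module k V]
    [FiniteDimensional k V] (hn : 1 ≤ Module.finrank k V)
    (T : Subgroup (V ≃ₗ[k] V))
    {I : Type*} [Fintype I] [DecidableEq I]
    (Vi : I → Submodule k V) (hne : ∀ i, Vi i ≠ ⊥)
    (hdirect : DirectSum.IsInternal Vi)
    (χ : I → ↥T → k)
    (hχ : ∀ i, ∀ t : ↥T, ∀ v ∈ Vi i, (t : V ≃ₗ[k] V) v = χ i t • v)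
    (hdist : ∀ i j, i ≠ j → ∃ t : ↥T, χ i t ≠ χ j t)
    (u : V ≃ₗ[k] V)
    (hu : IsNilpotent ((u : Module.End k V) - 1))
    (hreg : ((u : Module.End k V) - 1) ^ (Module.finrank k V - 1) ≠ 0)
    (hnorm : ∀ t : V ≃ₗ[k] V, t ∈ T ↔ u * t * u⁻¹ ∈ T) :
    ∃ d : ℕ, (∀ i, Module.finrank k (Vi i) = d) ∧
      Module.finrank k V = d * Fintype.card I ∧
      ((∃ W : Submodule k V, W ≠ ⊥ ∧ W ≠ ⊤ ∧
          (∀ v ∈ W, u v ∈ W) ∧ ∀ t ∈ T, ∀ v ∈ W, t v ∈ W) ↔ 1 < d) :=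
  stmt6_general T Vi hne hdirect χ hχ hdist u hu hreg hnorm
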